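/- arXiv:quant-ph/0105079 — 4 statements merged into one kernel-verified Lean document; each statement's English description precedes it below -/
import Mathlib

section
/- Let $(c_{n,m})_{n,m\in\mathbb{Z}}$ with $c_{n,m} = \langle h_n, h_m\rangle$ for a sequence of unit vectors $(h_n)$ in a Hilbert space, and let $E$ be the associated covariant localization observable with matrix elements $\langle e_n, E(X)e_m\rangle = c_{n,m}\int_X z^{m-n} d\mu(z)$. Then $E(X)E(Y) = E(Y)E(X)$ for all Borel sets $X, Y \subseteq \mathbb{T}$ if and only if $c_{n,n+k}\, c_{n+k,m} = c_{n,m-k}\, c_{m-k,m}$ for all $n, m, k \in \mathbb{Z}$. -/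
open MeasureTheory Complex

/-- The circle integral `∫_X z^k dμ(z)` in the parametrization `z = e^{iθ}`, `θ ∈ [0, 2π)`. -/
noncomputable def circInt (k : ℤ) (X : Set ℝ) : ℂ :=
  (2 * Real.pi : ℂ)⁻¹ * ∫ θ in X, Complex.exp (Complex.I * (k : ℂ) * (θ : ℂ))

/-!
Reindexing the second product by `j ↦ n + m - j`, the matrix element
`⟪eₙ, (E X E Y - E Y E X) eₘ⟫` is `∑ₖ bₖ x̂(k) ŷ(m - n - k)`, where
`bₖ = c_{n,n+k} c_{n+k,m} - c_{n,m-k} c_{m-k,m}` and `x̂`, `ŷ` are the circle integrals over `X`, `Y`;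
so the identity `b = 0` gives commutativity.
Conversely, for unit windows `X = [α, α + 1)`, `Y = [β, β + 1)` we have `x̂(k) = e^{ikα} ŵ(k)`,
`ŷ(k) = e^{ikβ} ŵ(k)` with `ŵ` the circle integrals over `[0, 1)`, so commutativity makes the
absolutely convergent trigonometric series `∑ₖ bₖ ŵ(k) ŵ(m - n - k) e^{ik(α - β)}` vanish.
As `α - β` covers a full period, all its coefficients vanish, and `ŵ(k) ≠ 0` because `π` is
irrational.
-/

open Real Set

lemma summable_norm_mul_of_summable_sq {G R : Type*} [AddGroup G] [SeminormedRing R] {f : G → R}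
    (hf : Summable fun k => ‖f k‖ ^ 2) (N : G) : Summable fun k => ‖f k * f (N - k)‖ := by
  have hf' : Summable fun k => ‖f (N - k)‖ ^ 2 := (Equiv.subLeft N).summable_iff.mpr hf
  refine Summable.of_nonneg_of_le (fun k => norm_nonneg _) (fun k => ?_) (hf.add hf')
  nlinarith [norm_mul_le (f k) (f (N - k)), two_mul_le_add_sq ‖f k‖ ‖f (N - k)‖,
    norm_nonneg (f k), norm_nonneg (f (N - k))]

lemma norm_exp_I_mul_intCast_mul_ofReal (k : ℤ) (γ : ℝ) : ‖exp (I * k * γ)‖ = 1 := by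
  simpa [mul_assoc] using norm_exp_I_mul_ofReal (k * γ)

lemma integral_exp_I_mul_intCast_neg_pi_pi (k : ℤ) :
    ∫ γ in -π..π, exp (I * k * γ) = if k = 0 then (2 * π : ℂ) else 0 := by
  split_ifs with hk
  · simp only [hk, Int.cast_zero, mul_zero, zero_mul, Complex.exp_zero,
      intervalIntegral.integral_const, sub_neg_eq_add, real_smul, ofReal_add, mul_one]
    ring
  · have hIk : I * k ≠ 0 := mul_ne_zero I_ne_zero (Int.cast_ne_zero.mpr hk)
    rw [integral_exp_mul_complex hIk, div_eq_zero_iff, sub_eq_zero]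
    left
    rw [← mul_one (exp (I * k * ((-π : ℝ) : ℂ))), ← exp_int_mul_two_pi_mul_I k, ← Complex.exp_add]
    congr 1
    push_cast
    ring

lemma eq_zero_of_hasSum_mul_exp_eq_zero {s : ℤ → ℂ} (hs : Summable fun k => ‖s k‖)
    (h : ∀ γ ∈ Ioc (-π) π, HasSum (fun k => s k * exp (I * k * γ)) 0) (k₀ : ℤ) : s k₀ = 0 := by
  have hshift : ∀ γ ∈ Ioc (-π) π, HasSum (fun k => s k * exp (I * (k - k₀ : ℤ) * γ)) 0 := by
    intro γ hγ
    have := (h γ hγ).mul_right (exp (I * (-k₀ : ℤ) * γ))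
    rw [zero_mul] at this
    refine this.congr_fun fun k => ?_
    rw [mul_assoc (s k), ← Complex.exp_add]
    push_cast
    ring_nf
  have hint : HasSum (fun k => ∫ γ in -π..π, s k * exp (I * (k - k₀ : ℤ) * γ))
      (∫ γ in -π..π, (0 : ℂ)) := by
    have hcont : ∀ k, Continuous fun γ : ℝ => s k * exp (I * (k - k₀ : ℤ) * γ) :=
      fun k => by fun_prop
    refine intervalIntegral.hasSum_integral_of_dominated_convergence (fun k _ => ‖s k‖)
      (fun k => (hcont k).aestronglyMeasurable)
      (fun k => ae_of_all _ fun γ _ => ?_) (ae_of_all _ fun _ _ => hs) intervalIntegrable_const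
      (ae_of_all _ fun γ hγ => hshift γ ?_)
    · rw [norm_mul, norm_exp_I_mul_intCast_mul_ofReal, mul_one]
    · rwa [uIoc_of_le (by linarith [pi_pos])] at hγ
  have hterm : ∀ k, ∫ γ in -π..π, s k * exp (I * (k - k₀ : ℤ) * γ) =
      if k = k₀ then s k₀ * (2 * π) else 0 := by
    intro k
    rw [intervalIntegral.integral_const_mul, integral_exp_I_mul_intCast_neg_pi_pi]
    by_cases hk : k = k₀
    · simp [hk]
    · simp [hk, sub_eq_zero]
  rw [intervalIntegral.integral_zero] at hint
  have h2π : (2 * π : ℂ) ≠ 0 := by simp [pi_ne_zero]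
  have := (hint.congr_fun fun k => (hterm k).symm).unique (hasSum_ite_eq k₀ _)
  exact (mul_eq_zero.mp this.symm).resolve_right h2π

namespace HilbertBasis

variable {ι 𝕜 E : Type*} [RCLike 𝕜] [NormedAddCommGroup E] [InnerProductSpace 𝕜 E]

lemma hasSum_inner_apply_mul_inner (b : HilbertBasis ι 𝕜 E) (A : E →L[𝕜] E) (x y : E) :
    HasSum (fun i => inner 𝕜 x (A (b i)) * inner 𝕜 (b i) y) (inner 𝕜 x (A y)) := by
  convert ((b.hasSum_repr y).mapL A).mapL (innerSL 𝕜 x) using 1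
  · ext i
    simp [b.repr_apply_apply, mul_comm]
  · simp

lemma eq_zero_of_inner_eq_zero (b : HilbertBasis ι 𝕜 E) {x : E} (h : ∀ i, inner 𝕜 (b i) x = 0) :
    x = 0 :=
  (b.hasSum_repr x).unique (by simp [b.repr_apply_apply, h])

lemma continuousLinearMap_eq_zero (b : HilbertBasis ι 𝕜 E) {T : E →L[𝕜] E}
    (h : ∀ i j, inner 𝕜 (b i) (T (b j)) = 0) : T = 0 := by
  refine ContinuousLinearMap.ext_on
    (Submodule.dense_iff_topologicalClosure_eq_top.mpr b.dense_span) ?_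
  rintro _ ⟨j, rfl⟩
  exact b.eq_zero_of_inner_eq_zero fun i => h i j

end HilbertBasis

lemma circInt_Ico {a b : ℝ} (hab : a ≤ b) (k : ℤ) :
    circInt k (Ico a b) = (2 * π : ℂ)⁻¹ * ∫ θ in a..b, exp (I * k * θ) := by
  rw [circInt, integral_Ico_eq_integral_Ioo, ← integral_Ioc_eq_integral_Ioo,
    intervalIntegral.integral_of_le hab]

lemma circInt_Ico_add {L : ℝ} (hL : 0 ≤ L) (k : ℤ) (a : ℝ) :
    circInt k (Ico a (a + L)) = exp (I * k * a) * circInt k (Ico 0 L) := by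
  have hshift : ∫ θ in a..a + L, exp (I * k * θ) =
      ∫ θ in (0:ℝ)..L, exp (I * k * a) * exp (I * k * θ) := by
    simp_rw [← Complex.exp_add, ← mul_add, add_comm (a : ℂ), ← ofReal_add]
    rw [intervalIntegral.integral_comp_add_right (fun θ : ℝ => exp (I * k * θ)), zero_add,
      add_comm]
  rw [circInt_Ico (by linarith), circInt_Ico hL, hshift, intervalIntegral.integral_const_mul]
  ring

lemma circInt_zero_Ico_zero_one : circInt 0 (Ico 0 1) = (2 * π : ℂ)⁻¹ := by
  simp [circInt_Ico zero_le_one]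

lemma circInt_Ico_zero_one {k : ℤ} (hk : k ≠ 0) :
    circInt k (Ico 0 1) = (2 * π : ℂ)⁻¹ * ((exp (I * k) - 1) / (I * k)) := by
  have hIk : I * k ≠ 0 := mul_ne_zero I_ne_zero (Int.cast_ne_zero.mpr hk)
  rw [circInt_Ico zero_le_one, integral_exp_mul_complex hIk]
  simp

lemma exp_I_mul_intCast_ne_one {k : ℤ} (hk : k ≠ 0) : exp (I * k) ≠ 1 := by
  rw [Ne, Complex.exp_eq_one_iff]
  rintro ⟨l, hl⟩
  have hkl : (k : ℝ) = (2 * l : ℤ) * π := by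
    have : ((k : ℝ) : ℂ) = ((((2 * l : ℤ) : ℝ) * π : ℝ) : ℂ) := by
      push_cast
      linear_combination (-I) * hl + (k - 2 * l * π) * I_sq
    exact_mod_cast this
  have hl0 : (2 * l : ℤ) ≠ 0 := by
    rintro h0; rw [h0, Int.cast_zero, zero_mul] at hkl; exact hk (by exact_mod_cast hkl)
  exact (irrational_pi.intCast_mul hl0).ne_int k hkl.symm

lemma circInt_Ico_zero_one_ne_zero (k : ℤ) : circInt k (Ico 0 1) ≠ 0 := by
  have h2π : (2 * π : ℂ)⁻¹ ≠ 0 := by simp [pi_ne_zero]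
  rcases eq_or_ne k 0 with rfl | hk
  · rw [circInt_zero_Ico_zero_one]; exact h2π
  · rw [circInt_Ico_zero_one hk]
    exact mul_ne_zero h2π (div_ne_zero (sub_ne_zero.mpr (exp_I_mul_intCast_ne_one hk))
      (mul_ne_zero I_ne_zero (Int.cast_ne_zero.mpr hk)))

lemma norm_circInt_Ico_zero_one_le {k : ℤ} (hk : k ≠ 0) :
    ‖circInt k (Ico 0 1)‖ ≤ 1 / |(k : ℝ)| := by
  have hk' : 0 < |(k : ℝ)| := abs_pos.mpr (Int.cast_ne_zero.mpr hk)
  have hnum : ‖exp (I * k) - 1‖ ≤ 2 := by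
    have := norm_exp_I_mul_ofReal_sub_one (k : ℝ)
    push_cast at this
    rw [this, norm_mul, Real.norm_two]
    nlinarith [abs_sin_le_one ((k : ℝ) / 2), Real.norm_eq_abs (sin ((k : ℝ) / 2))]
  rw [circInt_Ico_zero_one hk, norm_mul, norm_div, norm_mul, norm_I, one_mul, norm_inv,
    norm_intCast]
  have hπ : ‖(2 * π : ℂ)‖ = 2 * π := by
    rw [show (2 * π : ℂ) = ((2 * π : ℝ) : ℂ) by push_cast; ring, norm_real, Real.norm_eq_abs,
      abs_of_pos (by positivity)]
  rw [hπ, ← mul_div_assoc, div_le_div_iff_of_pos_right hk', inv_mul_le_iff₀ (by positivity)]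
  linarith [pi_gt_three]

lemma summable_norm_circInt_Ico_zero_one_sq :
    Summable fun k : ℤ => ‖circInt k (Ico 0 1)‖ ^ 2 := by
  refine Summable.of_norm_bounded_eventually
    (Real.summable_one_div_int_pow.mpr one_lt_two) ?_
  filter_upwards [Filter.eventually_cofinite_ne 0] with k hk
  rw [norm_pow, norm_norm, ← sq_abs (k : ℝ), one_div, ← inv_pow, ← one_div]
  exact pow_le_pow_left₀ (norm_nonneg _) (norm_circInt_Ico_zero_one_le hk) 2

lemma circInt_Ico_add_one_mul (k N : ℤ) (α β : ℝ) :
    circInt k (Ico α (α + 1)) * circInt (N - k) (Ico β (β + 1)) =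
      exp (I * N * β) * (circInt k (Ico 0 1) * circInt (N - k) (Ico 0 1) *
        exp (I * k * (α - β : ℝ))) := by
  rw [circInt_Ico_add zero_le_one, circInt_Ico_add zero_le_one]
  have : exp (I * k * α) * exp (I * (N - k : ℤ) * β) =
      exp (I * N * β) * exp (I * k * (α - β : ℝ)) := by
    rw [← Complex.exp_add, ← Complex.exp_add]
    push_cast
    ring_nf
  linear_combination circInt k (Ico 0 1) * circInt (N - k) (Ico 0 1) * this

lemma Ico_add_one_subset_Ico_zero_two_pi {α : ℝ} (h₀ : 0 ≤ α) (hπ : α ≤ π) :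
    Ico α (α + 1) ⊆ Ico 0 (2 * π) :=
  Ico_subset_Ico h₀ (by linarith [pi_gt_three])

section Covariant

variable {H : Type*} [NormedAddCommGroup H] [InnerProductSpace ℂ H]
  (e : HilbertBasis ℤ ℂ H) (c : ℤ → ℤ → ℂ)

lemma hasSum_inner_commutator {A B : H →L[ℂ] H} {x y : ℤ → ℂ}
    (hA : ∀ n m, inner ℂ (e n) (A (e m)) = c n m * x (m - n))
    (hB : ∀ n m, inner ℂ (e n) (B (e m)) = c n m * y (m - n)) (n m : ℤ) :
    HasSum (fun k => (c n (n + k) * c (n + k) m - c n (m - k) * c (m - k) m) *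
        (x k * y (m - n - k)))
      (inner ℂ (e n) ((A * B - B * A) (e m))) := by
  have hAB := (Equiv.addLeft n).hasSum_iff.mpr (e.hasSum_inner_apply_mul_inner A (e n) (B (e m)))
  have hBA := (Equiv.subLeft m).hasSum_iff.mpr (e.hasSum_inner_apply_mul_inner B (e n) (A (e m)))
  rw [sub_apply, inner_sub_right]
  refine (hAB.sub hBA).congr_fun fun k => ?_
  simp only [Function.comp_apply, Equiv.coe_addLeft, Equiv.subLeft_apply, hA, hB]
  rw [show n + k - n = k by ring, show m - (n + k) = m - n - k by ring,
    show m - k - n = m - n - k by ring, show m - (m - k) = k by ring]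
  ring

def IsCovariantLocalization (E : Set ℝ → (H →L[ℂ] H)) : Prop :=
  ∀ (n m : ℤ) (X : Set ℝ), MeasurableSet X → X ⊆ Set.Ico 0 (2 * Real.pi) →
    (inner ℂ (e n) (E X (e m)) : ℂ) = c n m * circInt (m - n) X

variable {e c} {E : Set ℝ → (H →L[ℂ] H)}

lemma localization_commute_of_coeff_eq (hE : IsCovariantLocalization e c E)
    (hc : ∀ n m k : ℤ, c n (n + k) * c (n + k) m = c n (m - k) * c (m - k) m)
    {X Y : Set ℝ} (hXm : MeasurableSet X) (hX : X ⊆ Ico 0 (2 * π))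
    (hYm : MeasurableSet Y) (hY : Y ⊆ Ico 0 (2 * π)) : E X * E Y = E Y * E X := by
  rw [← sub_eq_zero]
  refine e.continuousLinearMap_eq_zero fun n m => ?_
  refine (hasSum_inner_commutator e c (x := (circInt · X)) (y := (circInt · Y))
    (hE · · X hXm hX) (hE · · Y hYm hY) n m).unique ?_
  simp [hc]

lemma coeff_eq_of_localization_commute (hE : IsCovariantLocalization e c E)
    (hc : ∀ n m, ‖c n m‖ ≤ 1)
    (hcomm : ∀ X Y : Set ℝ, MeasurableSet X → X ⊆ Ico 0 (2 * π) →
      MeasurableSet Y → Y ⊆ Ico 0 (2 * π) → E X * E Y = E Y * E X) (n m k : ℤ) :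
    c n (n + k) * c (n + k) m = c n (m - k) * c (m - k) m := by
  set b : ℤ → ℂ := fun k => c n (n + k) * c (n + k) m - c n (m - k) * c (m - k) m
  set w : ℤ → ℂ := fun k => circInt k (Ico 0 1)
  have hb : ∀ k, ‖b k‖ ≤ 2 := fun k => by
    calc ‖b k‖ ≤ ‖c n (n + k)‖ * ‖c (n + k) m‖ + ‖c n (m - k)‖ * ‖c (m - k) m‖ := by
          simpa only [← norm_mul] using norm_sub_le _ _
      _ ≤ 1 * 1 + 1 * 1 := by gcongr <;> apply hc
      _ = 2 := by norm_num
  have hsummable : Summable fun k => ‖b k * (w k * w (m - n - k))‖ :=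
    Summable.of_nonneg_of_le (fun k => norm_nonneg _)
      (fun k => by rw [norm_mul]; exact mul_le_mul_of_nonneg_right (hb k) (norm_nonneg _))
      ((summable_norm_mul_of_summable_sq summable_norm_circInt_Ico_zero_one_sq (m - n)).mul_left 2)
  have hvanish : ∀ γ ∈ Ioc (-π) π,
      HasSum (fun k => b k * (w k * w (m - n - k)) * exp (I * k * γ)) 0 := by
    intro γ hγ
    -- the window offsets `max γ 0` and `max (-γ) 0` lie in `[0, π]` and differ by `γ`
    have hα : Ico (max γ 0) (max γ 0 + 1) ⊆ Ico 0 (2 * π) :=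
      Ico_add_one_subset_Ico_zero_two_pi (le_max_right _ _) (max_le hγ.2 pi_pos.le)
    have hβ : Ico (max (-γ) 0) (max (-γ) 0 + 1) ⊆ Ico 0 (2 * π) :=
      Ico_add_one_subset_Ico_zero_two_pi (le_max_right _ _)
        (max_le (by linarith [hγ.1]) pi_pos.le)
    have hsum := hasSum_inner_commutator e c (x := (circInt · _)) (y := (circInt · _))
      (hE · · _ measurableSet_Ico hα) (hE · · _ measurableSet_Ico hβ) n m
    rw [hcomm _ _ measurableSet_Ico hα measurableSet_Ico hβ, sub_self,
      zero_apply, inner_zero_right] at hsum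
    rw [← hasSum_mul_left_iff (exp_ne_zero (I * (m - n : ℤ) * (max (-γ) 0 : ℝ))), mul_zero]
    refine hsum.congr_fun fun k => ?_
    rw [circInt_Ico_add_one_mul, max_zero_sub_eq_self]
    ring
  have hbw := eq_zero_of_hasSum_mul_exp_eq_zero hsummable hvanish k
  have hbk : b k = 0 := (mul_eq_zero.mp hbw).resolve_right
    (mul_ne_zero (circInt_Ico_zero_one_ne_zero _) (circInt_Ico_zero_one_ne_zero _))
  exact sub_eq_zero.mp hbk

end Covariant

/-- A covariant localization observable `E` with matrix elements
`⟪eₙ, E(X) eₘ⟫ = c n m ∫_X z^{m-n} dμ(z)`, `c n m = ⟪hₙ, hₘ⟫`, is commutative iff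
`c_{n,n+k} c_{n+k,m} = c_{n,m-k} c_{m-k,m}` for all `n, m, k ∈ ℤ`. -/
theorem localization_commutative_iff
    {H : Type*} [NormedAddCommGroup H] [InnerProductSpace ℂ H]
    {H₂ : Type*} [NormedAddCommGroup H₂] [InnerProductSpace ℂ H₂]
    (e : HilbertBasis ℤ ℂ H₂)
    (h : ℤ → H) (hh : ∀ n, ‖h n‖ = 1)
    (c : ℤ → ℤ → ℂ) (hc : ∀ n m, c n m = (inner ℂ (h n) (h m) : ℂ))
    (E : Set ℝ → (H₂ →L[ℂ] H₂))
    (hE : ∀ (n m : ℤ) (X : Set ℝ), MeasurableSet X → X ⊆ Set.Ico 0 (2 * Real.pi) →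
      (inner ℂ (e n) (E X (e m)) : ℂ) = c n m * circInt (m - n) X) :
    (∀ X Y : Set ℝ, MeasurableSet X → X ⊆ Set.Ico 0 (2 * Real.pi) →
        MeasurableSet Y → Y ⊆ Set.Ico 0 (2 * Real.pi) → E X * E Y = E Y * E X) ↔
      (∀ n m k : ℤ, c n (n + k) * c (n + k) m = c n (m - k) * c (m - k) m) := by
  have hc_le : ∀ n m, ‖c n m‖ ≤ 1 := fun n m => by
    simpa [hc, hh] using norm_inner_le_norm (𝕜 := ℂ) (h n) (h m)
  exact ⟨coeff_eq_of_localization_commute hE hc_le,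
    fun hcoeff _ _ hXm hX hYm hY => localization_commute_of_coeff_eq hE hcoeff hXm hX hYm hY⟩
end

section
/- Let $(b_{n,m})_{n,m\in J}$, $J\subseteq\mathbb{Z}$, be a positive semidefinite complex matrix. Then the double series $\sum_{n,m\in J,\; b_{n,n}\ne 0\ne b_{m,m}} \frac{b_{n,m}}{\sqrt{b_{n,n} b_{m,m}}\,(|n|+1)(|m|+1)} |\chi_{\{n\}}\rangle\langle\chi_{\{m\}}|$ converges in the weak operator topology on $\ell^2(J)$ to a bounded positive operator. -/
open Complex
open scoped ComplexOrder Classical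

/-!
Positive semidefiniteness of `b` on two-point supports gives `‖b n m‖ ≤ √bₙₙ √bₘₘ`, so the
normalised kernel `cₙₘ = bₙₘ / (√(bₙₙ bₘₘ) (|n|+1)(|m|+1))` is dominated by `aₙ aₘ` with
`aₙ = (|n|+1)⁻¹ ∈ ℓ²`. Such a kernel makes `∑ conj uₙ cₙₘ wₘ` absolutely summable, with modulus at
most `‖a‖² ‖u‖ ‖w‖`; this bounded sesquilinear form is represented by an operator `S`. The
quadratic form of `S` is the limit of the finite sums over `s ×ˢ s`, which are quadratic forms
of `b` at rescaled vectors, hence nonnegative.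
-/

open scoped ComplexConjugate ENNReal InnerProductSpace InnerProduct

theorem lp.summable_norm_mul_norm_and_tsum_le {ι : Type*} {E F : ι → Type*}
    [∀ i, NormedAddCommGroup (E i)] [∀ i, NormedAddCommGroup (F i)] (a : lp E 2) (u : lp F 2) :
    Summable (fun n => ‖a n‖ * ‖u n‖) ∧ ∑' n, ‖a n‖ * ‖u n‖ ≤ ‖a‖ * ‖u‖ := by
  have h2 : (0 : ℝ) < (2 : ℝ≥0∞).toReal := by norm_num
  rw [lp.norm_eq_tsum_rpow h2 a, lp.norm_eq_tsum_rpow h2 u]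
  simpa using Real.summable_and_inner_le_Lp_mul_Lq_tsum_of_nonneg .two_two
    (fun n => norm_nonneg (a n)) (fun n => norm_nonneg (u n))
    (by simpa using (lp.memℓp a).summable h2) (by simpa using (lp.memℓp u).summable h2)

section DominatedKernel

variable {ι 𝕜 : Type*} [RCLike 𝕜] {a : lp (fun _ : ι => ℝ) 2} {c : ι → ι → 𝕜}

local notation "ℓ²" => lp (fun _ : ι => 𝕜) 2

theorem summable_kernel_and_norm_tsum_le (hc : ∀ n m, ‖c n m‖ ≤ ‖a n‖ * ‖a m‖) (u w : ℓ²) :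
    Summable (fun nm : ι × ι => conj (u nm.1) * c nm.1 nm.2 * w nm.2) ∧
      ‖∑' nm : ι × ι, conj (u nm.1) * c nm.1 nm.2 * w nm.2‖ ≤ ‖a‖ ^ 2 * ‖u‖ * ‖w‖ := by
  obtain ⟨hu, hu_le⟩ := lp.summable_norm_mul_norm_and_tsum_le a u
  obtain ⟨hw, hw_le⟩ := lp.summable_norm_mul_norm_and_tsum_le a w
  have hdom : ∀ nm : ι × ι, ‖conj (u nm.1) * c nm.1 nm.2 * w nm.2‖ ≤
      (‖a nm.1‖ * ‖u nm.1‖) * (‖a nm.2‖ * ‖w nm.2‖) := fun ⟨n, m⟩ => by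
    rw [norm_mul, norm_mul, RCLike.norm_conj]
    calc ‖u n‖ * ‖c n m‖ * ‖w m‖ ≤ ‖u n‖ * (‖a n‖ * ‖a m‖) * ‖w m‖ := by gcongr; exact hc n m
      _ = _ := by ring
  have hprod := hu.mul_of_nonneg hw (fun _ => by positivity) (fun _ => by positivity)
  refine ⟨.of_norm_bounded hprod hdom, ?_⟩
  calc _ ≤ ∑' nm : ι × ι, (‖a nm.1‖ * ‖u nm.1‖) * (‖a nm.2‖ * ‖w nm.2‖) :=
        tsum_of_norm_bounded hprod.hasSum hdom
    _ = (∑' n, ‖a n‖ * ‖u n‖) * ∑' m, ‖a m‖ * ‖w m‖ := (hu.tsum_mul_tsum hw hprod).symm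
    _ ≤ (‖a‖ * ‖u‖) * (‖a‖ * ‖w‖) := by gcongr
    _ = ‖a‖ ^ 2 * ‖u‖ * ‖w‖ := by ring

variable (a) in
noncomputable def kernelForm (hc : ∀ n m, ‖c n m‖ ≤ ‖a n‖ * ‖a m‖) : ℓ² →L⋆[𝕜] ℓ² →L[𝕜] 𝕜 :=
  LinearMap.mkContinuous₂
    (LinearMap.mk₂'ₛₗ (starRingEnd 𝕜) (RingHom.id 𝕜)
      (fun u w => ∑' nm : ι × ι, conj (u nm.1) * c nm.1 nm.2 * w nm.2)
      (fun u u' w => by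
        simp only [lp.coeFn_add, Pi.add_apply, map_add, add_mul]
        exact (summable_kernel_and_norm_tsum_le hc u w).1.tsum_add
          (summable_kernel_and_norm_tsum_le hc u' w).1)
      (fun z u w => by
        simp only [lp.coeFn_smul, Pi.smul_apply, smul_eq_mul, map_mul, mul_assoc]
        exact tsum_mul_left)
      (fun u w w' => by
        simp only [lp.coeFn_add, Pi.add_apply, mul_add]
        exact (summable_kernel_and_norm_tsum_le hc u w).1.tsum_add
          (summable_kernel_and_norm_tsum_le hc u w').1)
      (fun z u w => by
        simp only [lp.coeFn_smul, Pi.smul_apply, smul_eq_mul, RingHom.id_apply]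
        rw [← tsum_mul_left]
        exact tsum_congr fun nm => by ring))
    (‖a‖ ^ 2) fun u w => (summable_kernel_and_norm_tsum_le hc u w).2

theorem exists_hasSum_kernel_eq_inner (hc : ∀ n m, ‖c n m‖ ≤ ‖a n‖ * ‖a m‖) :
    ∃ S : ℓ² →L[𝕜] ℓ², ∀ u w : ℓ²,
      HasSum (fun nm : ι × ι => conj (u nm.1) * c nm.1 nm.2 * w nm.2) ⟪u, S w⟫_𝕜 := by
  refine ⟨(InnerProductSpace.continuousLinearMapOfBilin (kernelForm a hc))†, fun u w => ?_⟩
  rw [ContinuousLinearMap.adjoint_inner_right, InnerProductSpace.continuousLinearMapOfBilin_apply]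
  exact (summable_kernel_and_norm_tsum_le hc u w).1.hasSum

end DominatedKernel

theorem HasSum.nonneg_of_sum_product_self_nonneg {ι α : Type*} [AddCommMonoid α]
    [TopologicalSpace α] [Preorder α] [ClosedIciTopology α] {f : ι × ι → α} {x : α}
    (hf : HasSum f x) (h : ∀ s : Finset ι, 0 ≤ ∑ p ∈ s ×ˢ s, f p) : 0 ≤ x :=
  ge_of_tendsto (hf.comp (Filter.tendsto_finsetProd_atTop.comp Filter.tendsto_atTop_diagonal))
    (.of_forall h)

/-- The positivity half of `Matrix.PosSemidef (Matrix.of b)`; over `ℂ` it already forces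
Hermitian symmetry (`IsPosSemidefKernel.conj_apply`). -/
def IsPosSemidefKernel {ι : Type*} (b : ι → ι → ℂ) : Prop :=
  ∀ d : ι →₀ ℂ, 0 ≤ ∑ n ∈ d.support, ∑ m ∈ d.support, conj (d n) * b n m * d m

namespace IsPosSemidefKernel

variable {ι : Type*} {b : ι → ι → ℂ}

theorem sum_sum_conj_mul_mul_nonneg (hb : IsPosSemidefKernel b) (s : Finset ι) (e : ι → ℂ) :
    0 ≤ ∑ n ∈ s, ∑ m ∈ s, conj (e n) * b n m * e m := by
  set d := Finsupp.indicator s fun n _ => e n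
  have hd : ∀ n ∈ s, d n = e n := fun n hn => Finsupp.indicator_of_mem hn _
  have h : 0 ≤ d.sum fun n dn => d.sum fun m dm => conj dn * b n m * dm := hb d
  rw [Finsupp.sum_of_support_subset _ (Finsupp.support_indicator_subset _ _) _ (by simp)] at h
  refine h.trans_eq (Finset.sum_congr rfl fun n hn => ?_)
  rw [Finsupp.sum_of_support_subset _ (Finsupp.support_indicator_subset _ _) _ (by simp)]
  exact Finset.sum_congr rfl fun m hm => by rw [hd n hn, hd m hm]

theorem sum_pair_conj_mul_mul_nonneg (hb : IsPosSemidefKernel b) {n m : ι} (hnm : n ≠ m)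
    (α β : ℂ) :
    0 ≤ conj α * b n n * α + conj α * b n m * β + conj β * b m n * α + conj β * b m m * β := by
  have h := hb.sum_sum_conj_mul_mul_nonneg {n, m} fun k => if k = n then α else β
  simp only [Finset.sum_pair hnm, ↓reduceIte, if_neg hnm.symm] at h
  exact h.trans_eq (by ring)

theorem apply_self_nonneg (hb : IsPosSemidefKernel b) (n : ι) : 0 ≤ b n n := by
  simpa using hb.sum_sum_conj_mul_mul_nonneg {n} fun _ => 1

theorem conj_apply (hb : IsPosSemidefKernel b) (n m : ι) : conj (b n m) = b m n := by
  obtain rfl | hnm := eq_or_ne n m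
  · exact Complex.conj_eq_iff_im.2 (Complex.nonneg_iff.1 (hb.apply_self_nonneg n)).2.symm
  have h1 := (Complex.nonneg_iff.1 (hb.sum_pair_conj_mul_mul_nonneg hnm 1 1)).2
  have hI := (Complex.nonneg_iff.1 (hb.sum_pair_conj_mul_mul_nonneg hnm 1 I)).2
  have hn := (Complex.nonneg_iff.1 (hb.apply_self_nonneg n)).2
  have hm := (Complex.nonneg_iff.1 (hb.apply_self_nonneg m)).2
  simp only [map_one, one_mul, mul_one, add_im, conj_I, neg_mul, mul_im, I_im, I_re, mul_zero,
    add_zero, neg_im, zero_mul, zero_add, mul_re, zero_sub, neg_neg] at h1 hI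
  apply Complex.ext
  · rw [conj_re]; linarith
  · rw [conj_im]; linarith

theorem ofReal_re_apply_self (hb : IsPosSemidefKernel b) (n : ι) : ((b n n).re : ℂ) = b n n :=
  Complex.conj_eq_iff_re.1 (hb.conj_apply n n)

theorem norm_apply_le_sqrt_mul_sqrt (hb : IsPosSemidefKernel b) (n m : ι) :
    ‖b n m‖ ≤ √(b n n).re * √(b m m).re := by
  have hp := (Complex.nonneg_iff.1 (hb.apply_self_nonneg n)).1
  have hq := (Complex.nonneg_iff.1 (hb.apply_self_nonneg m)).1
  rw [← Real.sqrt_mul hp, ← Real.sqrt_sq (norm_nonneg _)]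
  refine Real.sqrt_le_sqrt ?_
  obtain rfl | hnm := eq_or_ne n m
  · rw [← Complex.re_eq_norm.2 (hb.apply_self_nonneg n), sq]
  set z := b n m
  -- Cauchy–Schwarz from the discriminant of the two-point form along `(t, -conj z)`.
  have hquad : ∀ t : ℝ,
      0 ≤ (b n n).re * (t * t) + (-2 * ‖z‖ ^ 2) * t + (b m m).re * ‖z‖ ^ 2 := fun t => by
    have h := hb.sum_pair_conj_mul_mul_nonneg hnm t (-conj z)
    rw [← hb.conj_apply n m, ← hb.ofReal_re_apply_self n, ← hb.ofReal_re_apply_self m] at h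
    refine Complex.zero_le_real.1 (h.trans_eq ?_)
    simp only [map_neg, Complex.conj_conj, Complex.conj_ofReal]
    push_cast
    linear_combination (((b m m).re : ℂ) - 2 * t) * Complex.mul_conj' z
  have hdisc := discrim_le_zero hquad
  rw [discrim] at hdisc
  nlinarith [sq_nonneg ‖z‖, mul_nonneg hp hq]

theorem norm_conj_mul_mul_le (hb : IsPosSemidefKernel b) (g : ι → ℂ) (n m : ι) :
    ‖conj (g n) * b n m * g m‖ ≤ (‖g n‖ * √(b n n).re) * (‖g m‖ * √(b m m).re) := by
  rw [norm_mul, norm_mul, RCLike.norm_conj]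
  calc ‖g n‖ * ‖b n m‖ * ‖g m‖ ≤ ‖g n‖ * (√(b n n).re * √(b m m).re) * ‖g m‖ := by
        gcongr; exact hb.norm_apply_le_sqrt_mul_sqrt n m
    _ = _ := by ring

theorem conj_mul_mul (hb : IsPosSemidefKernel b) (g : ι → ℂ) :
    IsPosSemidefKernel fun n m => conj (g n) * b n m * g m := fun d => by
  refine (hb.sum_sum_conj_mul_mul_nonneg d.support fun n => g n * d n).trans_eq ?_
  simp only [map_mul]
  exact Finset.sum_congr rfl fun n _ => Finset.sum_congr rfl fun m _ => by ring

theorem nonneg_of_hasSum (hb : IsPosSemidefKernel b) (u : ι → ℂ) {x : ℂ}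
    (hx : HasSum (fun nm : ι × ι => conj (u nm.1) * b nm.1 nm.2 * u nm.2) x) : 0 ≤ x := by
  refine hx.nonneg_of_sum_product_self_nonneg fun s => ?_
  rw [Finset.sum_product]
  exact hb.sum_sum_conj_mul_mul_nonneg s u

theorem ite_div_sqrt_mul_eq (hb : IsPosSemidefKernel b) (W : ι → ℤ) (n m : ι) :
    (if b n n ≠ 0 ∧ b m m ≠ 0 then
        b n m / ((√((b n n).re * (b m m).re) : ℂ) * W n * W m) else 0) =
      ((√(b n n).re * W n)⁻¹ : ℝ) * b n m * ((√(b m m).re * W m)⁻¹ : ℝ) := by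
  split_ifs with h
  · rw [Real.sqrt_mul (Complex.nonneg_iff.1 (hb.apply_self_nonneg n)).1]
    push_cast
    rw [div_eq_mul_inv, mul_inv, mul_inv, mul_inv]
    ring
  · rcases not_and_or.1 h with h | h <;> simp_all

end IsPosSemidefKernel

theorem summable_inv_abs_add_one_sq : Summable fun k : ℤ => ((|k| + 1 : ℤ) : ℝ)⁻¹ ^ 2 := by
  have h : Summable fun n : ℕ => ((n : ℝ) + 1)⁻¹ ^ 2 := by
    simpa [inv_pow] using (summable_nat_add_iff 1).2 (Real.summable_nat_pow_inv.2 one_lt_two)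
  exact .of_nat_of_neg (by simpa using h) (by simpa using h)

theorem memℓp_inv_abs_add_one (J : Set ℤ) :
    Memℓp (fun n : J => ((|(n : ℤ)| + 1 : ℤ) : ℝ)⁻¹) 2 :=
  (memℓp_gen_iff (by norm_num)).2 <|
    (summable_inv_abs_add_one_sq.subtype J).congr fun n => by simp

/-- For a positive semidefinite matrix `(b n m)_{n,m ∈ J}`, the double series
`∑_{n,m : bₙₙ ≠ 0 ≠ bₘₘ} bₙₘ / (√(bₙₙ bₘₘ) (|n|+1)(|m|+1)) |χₙ⟩⟨χₘ|` converges in the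
weak operator topology on `ℓ²(J)` to a bounded positive operator. -/
theorem weighted_gram_series_converges_weakly (J : Set ℤ) (b : J → J → ℂ)
    (hb : ∀ d : J →₀ ℂ,
      0 ≤ ∑ n ∈ d.support, ∑ m ∈ d.support, starRingEnd ℂ (d n) * b n m * d m) :
    ∃ S : lp (fun _ : J => ℂ) 2 →L[ℂ] lp (fun _ : J => ℂ) 2,
      (∀ w, 0 ≤ (inner ℂ w (S w) : ℂ)) ∧
      ∀ u w, HasSum
        (fun nm : J × J =>
          (if b nm.1 nm.1 ≠ 0 ∧ b nm.2 nm.2 ≠ 0 then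
              b nm.1 nm.2 /
                ((Real.sqrt ((b nm.1 nm.1).re * (b nm.2 nm.2).re) : ℂ) *
                  ((|(nm.1 : ℤ)| + 1 : ℤ) : ℂ) * ((|(nm.2 : ℤ)| + 1 : ℤ) : ℂ))
            else 0) *
            (inner ℂ u ((inner ℂ (lp.single 2 nm.2 (1 : ℂ)) w : ℂ) •
              lp.single 2 nm.1 (1 : ℂ)) : ℂ))
        (inner ℂ u (S w) : ℂ) := by
  replace hb : IsPosSemidefKernel b := hb
  let W : J → ℤ := fun n => |(n : ℤ)| + 1
  let g : J → ℂ := fun n => ((√(b n n).re * W n)⁻¹ : ℝ)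
  let a : lp (fun _ : J => ℝ) 2 := ⟨fun n => ((W n : ℝ))⁻¹, memℓp_inv_abs_add_one J⟩
  have hga : ∀ n, ‖g n‖ * √(b n n).re ≤ ‖a n‖ := fun n => by
    change ‖(((√(b n n).re * W n)⁻¹ : ℝ) : ℂ)‖ * √(b n n).re ≤ ‖((W n : ℝ))⁻¹‖
    rw [Complex.norm_real, Real.norm_eq_abs, abs_of_nonneg (by positivity), Real.norm_eq_abs,
      abs_of_pos (by positivity), mul_inv, mul_right_comm]
    exact mul_le_of_le_one_left (by positivity) (inv_mul_le_one_of_le₀ le_rfl (by positivity))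
  obtain ⟨S, hS⟩ := exists_hasSum_kernel_eq_inner fun n m =>
    (hb.norm_conj_mul_mul_le g n m).trans
      (mul_le_mul (hga n) (hga m) (by positivity) (norm_nonneg _))
  refine ⟨S, fun w => (hb.conj_mul_mul g).nonneg_of_hasSum w (hS w w), fun u w => ?_⟩
  refine (hS u w).congr_fun fun nm => ?_
  rw [hb.ite_div_sqrt_mul_eq W, inner_smul_right, lp.inner_single_left, lp.inner_single_right]
  simp only [RCLike.inner_apply, map_one, one_mul, mul_one, conj_ofReal, g]
  ring
end

section
/- Let $E: \mathcal{B}([0,2\pi)) \to \mathcal{L}(H)$ be a covariant normalized positive operator measure with matrix elements $\langle n, E(X) m\rangle = c_{n,m}(2\pi)^{-1}\int_X e^{i(n-m)\theta}d\theta$. Then for every $k \in \mathbb{N}$, the finite matrix $(c_{n,m})_{-k\le n,m\le k}$ is positive semidefinite, i.e., $\sum_{n,m=-k}^k c_{n,m} |n\rangle\langle m| \ge 0$. -/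
/-!
With `u = ∑ d n • e n`, the matrix elements give `⟪u, E X u⟫ = (2π)⁻¹ ∫_X g` for the continuous
trigonometric polynomial `g θ = ∑ conj (d n) c n m d m e^{i(n-m)θ}`. Positivity of `E` makes
`∫_{[0,ε)} g ≥ 0` for every small `ε > 0`; the averages `ε⁻¹ ∫_{[0,ε)} g` tend to `g 0` as `ε → 0⁺`,
so `g 0`, which is the quadratic form of `(c n m)` at `d`, is nonnegative.
-/

open MeasureTheory Complex Finset Filter Topology
open scoped ComplexOrder

theorem tendsto_inv_smul_setIntegral_Ico_zero {E : Type*} [NormedAddCommGroup E] [NormedSpace ℝ E]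
    [CompleteSpace E] {f : ℝ → E} (hf : Continuous f) :
    Tendsto (fun ε : ℝ => ε⁻¹ • ∫ θ in Set.Ico 0 ε, f θ) (𝓝[>] 0) (𝓝 (f 0)) := by
  have hderiv : HasDerivAt (fun x => ∫ t in (0 : ℝ)..x, f t) (f 0) 0 :=
    intervalIntegral.integral_hasDerivAt_right (hf.intervalIntegrable 0 0)
      (hf.stronglyMeasurableAtFilter _ _) hf.continuousAt
  refine ((hasDerivAt_iff_tendsto_slope.mp hderiv).mono_left
    (nhdsWithin_mono _ fun _ hx => ne_of_gt hx)).congr' ?_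
  filter_upwards [self_mem_nhdsWithin] with ε (hε : 0 < ε)
  rw [slope_def_module, intervalIntegral.integral_same, sub_zero, sub_zero,
    intervalIntegral.integral_of_le hε.le, integral_Ico_eq_integral_Ioo,
    integral_Ioc_eq_integral_Ioo]

theorem nonneg_of_eventually_setIntegral_Ico_nonneg {g : ℝ → ℂ} (hg : Continuous g)
    (h : ∀ᶠ ε in 𝓝[>] 0, 0 ≤ ∫ θ in Set.Ico 0 ε, g θ) : 0 ≤ g 0 := by
  refine ge_of_tendsto (tendsto_inv_smul_setIntegral_Ico_zero hg) ?_
  filter_upwards [h, self_mem_nhdsWithin] with ε hnonneg (hε : 0 < ε)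
  exact smul_nonneg (inv_nonneg.mpr hε.le) hnonneg

theorem inner_sum_smul_map_sum_smul {𝕜 H ι : Type*} [RCLike 𝕜] [NormedAddCommGroup H]
    [InnerProductSpace 𝕜 H] (A : H →ₗ[𝕜] H) (s : Finset ι) (v : ι → H) (d : ι → 𝕜) :
    inner 𝕜 (∑ n ∈ s, d n • v n) (A (∑ m ∈ s, d m • v m)) =
      ∑ n ∈ s, ∑ m ∈ s, starRingEnd 𝕜 (d n) * d m * inner 𝕜 (v n) (A (v m)) := by
  simp only [map_sum, map_smul, sum_inner, inner_sum, inner_smul_left, inner_smul_right,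
    mul_sum]
  rw [Finset.sum_comm]
  exact sum_congr rfl fun _ _ => sum_congr rfl fun _ _ => by ring

theorem integrableOn_exp_I_mul_intCast_sub_mul {X : Set ℝ} (hX : volume X ≠ ⊤) (n m : ℤ) :
    IntegrableOn (fun θ : ℝ => exp (I * ((n : ℂ) - (m : ℂ)) * θ)) X := by
  refine Measure.integrableOn_of_bounded hX (by fun_prop : Continuous _).aestronglyMeasurable
    (M := 1) (ae_of_all _ fun θ => ?_)
  have : I * ((n : ℂ) - (m : ℂ)) * θ = I * ((n - m : ℝ) * θ : ℝ) := by push_cast; ring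
  rw [this, norm_exp_I_mul_ofReal]

theorem inner_sum_smul_map_sum_smul_eq_setIntegral {H : Type*} [NormedAddCommGroup H]
    [InnerProductSpace ℂ H] (e : ℤ → H) (A : H →L[ℂ] H) (c : ℤ → ℤ → ℂ) {X : Set ℝ}
    (hX : volume X ≠ ⊤)
    (hA : ∀ n m : ℤ, inner ℂ (e n) (A (e m)) =
      c n m * (2 * Real.pi : ℂ)⁻¹ * ∫ θ in X, exp (I * ((n : ℂ) - (m : ℂ)) * θ))
    (s : Finset ℤ) (d : ℤ → ℂ) :
    inner ℂ (∑ n ∈ s, d n • e n) (A (∑ m ∈ s, d m • e m)) =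
      (2 * Real.pi : ℂ)⁻¹ * ∫ θ in X, ∑ n ∈ s, ∑ m ∈ s,
        starRingEnd ℂ (d n) * c n m * d m * exp (I * ((n : ℂ) - (m : ℂ)) * θ) := by
  have hint := integrableOn_exp_I_mul_intCast_sub_mul hX
  rw [← ContinuousLinearMap.coe_coe, inner_sum_smul_map_sum_smul, integral_finsetSum _
    fun n _ => integrable_finsetSum _ fun m _ => (hint n m).const_mul _, mul_sum]
  refine sum_congr rfl fun n _ => ?_
  rw [integral_finsetSum _ fun m _ => (hint n m).const_mul _, mul_sum]
  refine sum_congr rfl fun m _ => ?_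
  rw [ContinuousLinearMap.coe_coe, hA, integral_const_mul]
  ring

theorem positive_operator_measure_coefficients_posSemidef_general
    {H : Type*} [NormedAddCommGroup H] [InnerProductSpace ℂ H]
    (e : HilbertBasis ℤ ℂ H)
    (E : Set ℝ → (H →L[ℂ] H)) (c : ℤ → ℤ → ℂ)
    (hE : ∀ (n m : ℤ) (X : Set ℝ), MeasurableSet X → X ⊆ Set.Ico 0 (2 * Real.pi) →
      (inner ℂ (e n) (E X (e m)) : ℂ) = c n m * (2 * Real.pi : ℂ)⁻¹ *
        ∫ θ in X, Complex.exp (Complex.I * ((n : ℂ) - (m : ℂ)) * (θ : ℂ)))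
    (hpos : ∀ X : Set ℝ, MeasurableSet X → X ⊆ Set.Ico 0 (2 * Real.pi) →
      ∀ u : H, 0 ≤ (inner ℂ u (E X u) : ℂ)) :
    ∀ (k : ℕ) (d : ℤ → ℂ),
      0 ≤ ∑ n ∈ Finset.Icc (-(k : ℤ)) k, ∑ m ∈ Finset.Icc (-(k : ℤ)) k,
        starRingEnd ℂ (d n) * c n m * d m := by
  intro k d
  set S := Finset.Icc (-(k : ℤ)) k
  set g : ℝ → ℂ := fun θ => ∑ n ∈ S, ∑ m ∈ S,
    starRingEnd ℂ (d n) * c n m * d m * exp (I * ((n : ℂ) - (m : ℂ)) * θ)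
  have hg0 : 0 ≤ g 0 := by
    refine nonneg_of_eventually_setIntegral_Ico_nonneg (by fun_prop) ?_
    filter_upwards [Ioo_mem_nhdsGT Real.two_pi_pos] with ε hε
    have hsub : Set.Ico 0 ε ⊆ Set.Ico 0 (2 * Real.pi) := Set.Ico_subset_Ico_right hε.2.le
    have h := hpos _ measurableSet_Ico hsub (∑ n ∈ S, d n • e n)
    rw [inner_sum_smul_map_sum_smul_eq_setIntegral e _ c (by simp)
      (fun n m => hE n m _ measurableSet_Ico hsub)] at h
    have h2π : (0 : ℂ) < 2 * Real.pi := by positivity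
    simpa only [mul_inv_cancel_left₀ h2π.ne'] using mul_nonneg h2π.le h
  simpa [g] using hg0

/-- If a covariant normalized operator measure with matrix elements
`⟪n, E(X) m⟫ = c_{n,m} (2π)⁻¹ ∫_X e^{i(n-m)θ} dθ` is positive, then every finite
truncation `(c_{n,m})_{-k ≤ n,m ≤ k}` is a positive semidefinite matrix. -/
theorem positive_operator_measure_coefficients_posSemidef
    {H : Type*} [NormedAddCommGroup H] [InnerProductSpace ℂ H] [CompleteSpace H]
    (e : HilbertBasis ℤ ℂ H)
    (E : Set ℝ → (H →L[ℂ] H)) (c : ℤ → ℤ → ℂ)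
    (hnorm : E (Set.Ico 0 (2 * Real.pi)) = 1)
    (hE : ∀ (n m : ℤ) (X : Set ℝ), MeasurableSet X → X ⊆ Set.Ico 0 (2 * Real.pi) →
      (inner ℂ (e n) (E X (e m)) : ℂ) = c n m * (2 * Real.pi : ℂ)⁻¹ *
        ∫ θ in X, Complex.exp (Complex.I * ((n : ℂ) - (m : ℂ)) * (θ : ℂ)))
    (hpos : ∀ X : Set ℝ, MeasurableSet X → X ⊆ Set.Ico 0 (2 * Real.pi) →
      ∀ u : H, 0 ≤ (inner ℂ u (E X u) : ℂ)) :
    ∀ (k : ℕ) (d : ℤ → ℂ),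
      0 ≤ ∑ n ∈ Finset.Icc (-(k : ℤ)) k, ∑ m ∈ Finset.Icc (-(k : ℤ)) k,
        starRingEnd ℂ (d n) * c n m * d m :=
  positive_operator_measure_coefficients_posSemidef_general e E c hE hpos
end

section
/- Let $\widetilde{E}: \mathcal{B}(\mathbb{T}) \to \mathcal{L}(\mathcal{H})$ be a normalized positive operator measure of the form $\widetilde{E}(X) = \sum_{n,m\in\mathbb{N}} \langle\xi_n,\xi_m\rangle \int_X z^{m-n} d\mu(z)\, |n\rangle\langle m|$ for a sequence of unit vectors $(\xi_n)_{n\in\mathbb{N}}$ in $\mathcal{H}$, where $(|n\rangle)_{n\in\mathbb{N}}$ is an orthonormal basis. Then $\widetilde{E}$ is never projection valued: there exists a Borel set $X$ with $\widetilde{E}(X)^2 \ne \widetilde{E}(X)$. -/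
/-!
Take `X = [0, π)`. The diagonal entry `⟪e₀, E(X) e₀⟫` is `μ(X) = 1/2`, and for `m ≠ 0` the entry
`⟪e_m, E(X) e₀⟫` is bounded by `|∫_X z^{-m} dμ| ≤ 1/(π m)`. Since `conj (∫_X z^k) = ∫_X z^{-k}`,
the matrix of `E(X)` is Hermitian, so if `E(X)` were idempotent, expanding `E(X) e₀` in the basis
would give `1/2 = ⟪e₀, E(X)² e₀⟫ = ∑ₘ |⟪e_m, E(X) e₀⟫|² ≤ 1/4 + ∑_{m ≥ 1} 1/(π m)² = 1/4 + 1/6`.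
-/

open MeasureTheory Complex
open scoped ComplexOrder

open ComplexConjugate

lemma conj_circInt (k : ℤ) (X : Set ℝ) : conj (circInt k X) = circInt (-k) X := by
  unfold circInt
  rw [map_mul, ← integral_conj, map_inv₀, map_mul, map_ofNat, conj_ofReal]
  congr 2 with θ
  rw [← exp_conj]
  simp only [map_mul, conj_ofReal, conj_I, map_intCast]
  push_cast
  congr 1
  ring

lemma circInt_zero_Ico {a b : ℝ} (hab : a ≤ b) :
    circInt 0 (Set.Ico a b) = ((b - a) / (2 * Real.pi) : ℝ) := by
  simp [circInt, Measure.real, Real.volume_Ico, sub_nonneg.2 hab, div_eq_inv_mul]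

lemma norm_circInt_Ico_le {k : ℤ} (hk : k ≠ 0) {a b : ℝ} (hab : a ≤ b) :
    ‖circInt k (Set.Ico a b)‖ ≤ 1 / (Real.pi * |(k : ℝ)|) := by
  have hc : I * k ≠ 0 := mul_ne_zero I_ne_zero (Int.cast_ne_zero.2 hk)
  have hint : ∫ θ in Set.Ico a b, exp (I * k * θ) =
      (exp (I * k * b) - exp (I * k * a)) / (I * k) := by
    rw [integral_Ico_eq_integral_Ioo, ← integral_Ioc_eq_integral_Ioo,
      ← intervalIntegral.integral_of_le hab, integral_exp_mul_complex hc]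
  have hunit : ∀ x : ℝ, ‖exp (I * k * x)‖ = 1 := fun x => by simp [norm_exp]
  have hnum : ‖exp (I * k * b) - exp (I * k * a)‖ ≤ 2 := by
    linarith [norm_sub_le (exp (I * k * b)) (exp (I * k * a)), hunit a, hunit b]
  have hk_pos : 0 < |(k : ℝ)| := abs_pos.2 (Int.cast_ne_zero.2 hk)
  rw [circInt, hint, norm_mul, norm_div, norm_mul, norm_I, one_mul, norm_intCast, norm_inv,
    norm_mul, norm_real, Real.norm_of_nonneg Real.pi_pos.le, RCLike.norm_ofNat]
  calc (2 * Real.pi)⁻¹ * (‖exp (I * k * b) - exp (I * k * a)‖ / |(k : ℝ)|)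
      ≤ (2 * Real.pi)⁻¹ * (2 / |(k : ℝ)|) := by gcongr
    _ = 1 / (Real.pi * |(k : ℝ)|) := by field_simp

lemma HilbertBasis.hasSum_norm_inner_sq_of_isIdempotentElem {ι 𝕜 E : Type*} [RCLike 𝕜]
    [NormedAddCommGroup E] [InnerProductSpace 𝕜 E] (b : HilbertBasis ι 𝕜 E) {P : E →L[𝕜] E}
    (hP : IsIdempotentElem P) (i : ι)
    (hsymm : ∀ j, inner 𝕜 (b i) (P (b j)) = conj (inner 𝕜 (b j) (P (b i)))) :
    HasSum (fun j => ‖inner 𝕜 (b j) (P (b i))‖ ^ 2) (RCLike.re (inner 𝕜 (b i) (P (b i)))) := by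
  have hPP : P (P (b i)) = P (b i) := congr($hP.eq (b i))
  have hterm : ∀ j, inner 𝕜 (b i) (P (b.repr (P (b i)) j • b j)) =
      ((‖inner 𝕜 (b j) (P (b i))‖ ^ 2 : ℝ) : 𝕜) := fun j => by
    rw [map_smul, inner_smul_right, hsymm j, b.repr_apply_apply, RCLike.mul_conj,
      RCLike.ofReal_pow]
  have h := (b.hasSum_repr (P (b i))).mapL ((innerSL 𝕜 (b i)).comp P)
  simp only [ContinuousLinearMap.comp_apply, innerSL_apply_apply, hterm, hPP] at h
  simpa using RCLike.hasSum_re 𝕜 h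

lemma HasSum.le_add_one_sixth {f : ℕ → ℝ} {s c : ℝ} (hf : HasSum f s) (h0 : f 0 ≤ c)
    (hf_le : ∀ m ≠ 0, f m ≤ 1 / (Real.pi * m) ^ 2) : s ≤ c + 1 / 6 := by
  have hbasel : HasSum (fun m : ℕ => Real.pi⁻¹ ^ 2 * (1 / (m : ℝ) ^ 2)) (1 / 6) := by
    have hπ : Real.pi⁻¹ ^ 2 * (Real.pi ^ 2 / 6) = 1 / 6 := by field_simp
    have h := hasSum_zeta_two.mul_left (Real.pi⁻¹ ^ 2)
    rwa [hπ] at h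
  refine hasSum_le (fun m => ?_) hf ((hasSum_ite_eq 0 c).add hbasel)
  rcases eq_or_ne m 0 with rfl | hm
  · simpa using h0
  · simpa [hm, mul_pow, div_eq_mul_inv, mul_comm] using hf_le m hm

theorem phase_observable_not_projection_valued_general
    {G : Type*} [NormedAddCommGroup G] [InnerProductSpace ℂ G]
    {H : Type*} [NormedAddCommGroup H] [InnerProductSpace ℂ H]
    (e : HilbertBasis ℕ ℂ H)
    (ξ : ℕ → G) (hξ : ∀ n, ‖ξ n‖ = 1)
    (E : Set ℝ → (H →L[ℂ] H))
    (hE : ∀ (n m : ℕ) (X : Set ℝ), MeasurableSet X → X ⊆ Set.Ico 0 (2 * Real.pi) →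
      (inner ℂ (e n) (E X (e m)) : ℂ) =
        (inner ℂ (ξ n) (ξ m) : ℂ) * circInt ((m : ℤ) - (n : ℤ)) X) :
    ∃ X : Set ℝ, MeasurableSet X ∧ X ⊆ Set.Ico 0 (2 * Real.pi) ∧ E X * E X ≠ E X := by
  set X := Set.Ico 0 Real.pi
  have hXs : X ⊆ Set.Ico 0 (2 * Real.pi) :=
    Set.Ico_subset_Ico_right (by linarith [Real.pi_pos])
  refine ⟨X, measurableSet_Ico, hXs, fun hidem => ?_⟩
  have hentry n m := hE n m X measurableSet_Ico hXs
  have hsymm : ∀ m, inner ℂ (e 0) (E X (e m)) = conj (inner ℂ (e m) (E X (e 0))) := fun m => by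
    rw [hentry, hentry, map_mul, conj_circInt, inner_conj_symm, neg_sub]
  have hdiag : inner ℂ (e 0) (E X (e 0)) = 1 / 2 := by
    rw [hentry, sub_self, circInt_zero_Ico Real.pi_pos.le, sub_zero, inner_self_eq_norm_sq_to_K,
      hξ]
    push_cast
    field_simp
  have hoff : ∀ m ≠ 0, ‖inner ℂ (e m) (E X (e 0))‖ ^ 2 ≤ 1 / (Real.pi * m) ^ 2 := by
    intro m hm
    have hcirc := norm_circInt_Ico_le (k := 0 - m) (by simpa using hm) Real.pi_pos.le
    have hinner : ‖inner ℂ (ξ m) (ξ 0)‖ ≤ 1 := by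
      simpa [hξ] using norm_inner_le_norm (𝕜 := ℂ) (ξ m) (ξ 0)
    rw [hentry, norm_mul, one_div, ← inv_pow, ← one_div]
    gcongr
    simpa using mul_le_mul hinner hcirc (norm_nonneg _) zero_le_one
  have hsum := e.hasSum_norm_inner_sq_of_isIdempotentElem hidem 0 hsymm
  have hle := hsum.le_add_one_sixth (c := 1 / 4) (by rw [hdiag]; norm_num) hoff
  rw [hdiag] at hle
  norm_num at hle

/-- No covariant phase observable, i.e. no normalized positive operator measure of the form
`E(X) = ∑_{n,m ∈ ℕ} ⟪ξ_n, ξ_m⟫ ∫_X z^{m-n} dμ(z) |n⟩⟨m|` with `(ξ_n)` unit vectors, is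
projection valued. -/
theorem phase_observable_not_projection_valued
    {G : Type*} [NormedAddCommGroup G] [InnerProductSpace ℂ G]
    {H : Type*} [NormedAddCommGroup H] [InnerProductSpace ℂ H] [CompleteSpace H]
    (e : HilbertBasis ℕ ℂ H)
    (ξ : ℕ → G) (hξ : ∀ n, ‖ξ n‖ = 1)
    (E : Set ℝ → (H →L[ℂ] H))
    (hE : ∀ (n m : ℕ) (X : Set ℝ), MeasurableSet X → X ⊆ Set.Ico 0 (2 * Real.pi) →
      (inner ℂ (e n) (E X (e m)) : ℂ) =
        (inner ℂ (ξ n) (ξ m) : ℂ) * circInt ((m : ℤ) - (n : ℤ)) X)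
    (hnorm : E (Set.Ico 0 (2 * Real.pi)) = 1)
    (hpos : ∀ X : Set ℝ, MeasurableSet X → X ⊆ Set.Ico 0 (2 * Real.pi) →
      ∀ u : H, 0 ≤ (inner ℂ u (E X u) : ℂ)) :
    ∃ X : Set ℝ, MeasurableSet X ∧ X ⊆ Set.Ico 0 (2 * Real.pi) ∧ E X * E X ≠ E X :=
  phase_observable_not_projection_valued_general e ξ hξ E hE
end
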